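/- Assume the hypotheses H1–H5 of the paper hold for F : {1,...,T} × ℝ × ℝ × [−D,D] → ℝ (with bounds uniform in the parameter u, |u| ≤ D). Let u_n → u₀ uniformly with ‖u_n‖_C ≤ D, and let (x_n, y_n) be any solution of the discrete system Δ²x_n(k−1) = F_x(k,x_n(k),y_n(k),u_n(k)), Δ²y_n(k−1) = −F_y(k,x_n(k),y_n(k),u_n(k)) with zero Dirichlet boundary conditions that is a saddle point of the associated functional J_n. Then there is a subsequence (x_{n_i}, y_{n_i}) converging to some (x₀, y₀) ∈ H × H, and (x₀, y₀) solves the system with parameter u₀: Δ²x₀(k−1) = F_x(k,x₀(k),y₀(k),u₀(k)), Δ²y₀(k−1) = −F_y(k,x₀(k),y₀(k),u₀(k)), x₀(0)=x₀(T+1)=y₀(0)=y₀(T+1)=0. -/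

import Mathlib

open Finset Filter Topology

/-!
Testing the saddle property of `(x_n, y_n)` against the zero function gives
`J(x_n, 0) ≤ J(0, y_n)`. By H2 and H3 at zero, `F` grows at most quadratically with a coefficient
below `1/(2c₂)`, so through the Poincaré-type inequality `∑ x² ≤ c₂ E(x)` the nonlinear terms are
absorbed by the quadratic parts `±E/2`; this bounds the energies `E(x_n)`, `E(y_n)`, hence
`(x_n, y_n)`, uniformly in `n`. A subsequence then converges pointwise by compactness, and the
equations pass to the limit by continuity of `F_x`, `F_y` and convergence of `u_n`.
-/

/-- The paper's space `H`, its functions on `{0, …, T + 1}` extended by zero. -/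
def dirichletSpace (T : ℕ) : Set (ℕ → ℝ) := {x | x 0 = 0 ∧ ∀ k, T + 1 ≤ k → x k = 0}

def dirichletEnergy (T : ℕ) (x : ℕ → ℝ) : ℝ := ∑ k ∈ Icc 1 (T + 1), (x k - x (k - 1)) ^ 2

noncomputable def saddleFunctional (T : ℕ) (F : ℕ → ℝ → ℝ → ℝ → ℝ) (u x y : ℕ → ℝ) : ℝ :=
  (∑ k ∈ Icc 1 (T + 1), ((x k - x (k - 1)) ^ 2 / 2 - (y k - y (k - 1)) ^ 2 / 2)) +
    ∑ k ∈ Icc 1 T, F k (x k) (y k) (u k)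

lemma zero_mem_dirichletSpace (T : ℕ) : (0 : ℕ → ℝ) ∈ dirichletSpace T :=
  ⟨rfl, fun _ _ => rfl⟩

lemma isClosed_dirichletSpace (T : ℕ) : IsClosed (dirichletSpace T) := by
  simp only [dirichletSpace, Set.ofPred_and, Set.ofPred_forall]
  exact (isClosed_eq (continuous_apply 0) continuous_const).inter <|
    isClosed_iInter fun k => isClosed_iInter fun _ =>
      isClosed_eq (continuous_apply k) continuous_const

lemma eq_zero_of_mem_dirichletSpace {T : ℕ} {x : ℕ → ℝ} (hx : x ∈ dirichletSpace T) {k : ℕ}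
    (hk : k ∉ Icc 1 T) : x k = 0 := by
  rcases Nat.eq_zero_or_pos k with rfl | hpos
  · exact hx.1
  · exact hx.2 k (by simp only [mem_Icc, not_and, not_le] at hk; omega)

lemma dirichletEnergy_nonneg (T : ℕ) (x : ℕ → ℝ) : 0 ≤ dirichletEnergy T x :=
  sum_nonneg fun _ _ => sq_nonneg _

lemma saddleFunctional_zero_right (T : ℕ) (F : ℕ → ℝ → ℝ → ℝ → ℝ) (u x : ℕ → ℝ) :
    saddleFunctional T F u x 0 = dirichletEnergy T x / 2 + ∑ k ∈ Icc 1 T, F k (x k) 0 (u k) := by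
  simp [saddleFunctional, dirichletEnergy, sum_div]

lemma saddleFunctional_zero_left (T : ℕ) (F : ℕ → ℝ → ℝ → ℝ → ℝ) (u y : ℕ → ℝ) :
    saddleFunctional T F u 0 y =
      -(dirichletEnergy T y / 2) + ∑ k ∈ Icc 1 T, F k 0 (y k) (u k) := by
  simp [saddleFunctional, dirichletEnergy, sum_div]

lemma mul_le_mul_sq_add_sq_div {ε : ℝ} (hε : 0 < ε) (β s : ℝ) :
    β * s ≤ ε * s ^ 2 + β ^ 2 / (4 * ε) := by
  have h : β ^ 2 / (4 * ε) * (4 * ε) = β ^ 2 := div_mul_cancel₀ _ (by positivity)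
  nlinarith [sq_nonneg (2 * ε * s - β)]

lemma exists_coercive_lower_bound (T : ℕ) {c α : ℝ} (hc : 0 < c) (hα : α < 1 / (2 * c))
    (β : ℝ) (γ : ℕ → ℝ) : ∃ a > 0, ∃ C, ∀ x f : ℕ → ℝ,
      ∑ k ∈ Icc 1 T, x k ^ 2 ≤ c * dirichletEnergy T x →
      (∀ k ∈ Icc 1 T, -α * x k ^ 2 + β * x k + γ k ≤ f k) →
      a * dirichletEnergy T x + C ≤ dirichletEnergy T x / 2 + ∑ k ∈ Icc 1 T, f k := by
  obtain ⟨ε, hε, hc'⟩ : ∃ ε > 0, (max α 0 + ε) * c < 1 / 2 := by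
    have hmax : max α 0 < 1 / (2 * c) := max_lt hα (by positivity)
    refine ⟨(1 / (2 * c) - max α 0) / 2, by linarith, ?_⟩
    calc (max α 0 + (1 / (2 * c) - max α 0) / 2) * c < 1 / (2 * c) * c := by gcongr; linarith
      _ = 1 / 2 := by field_simp
  refine ⟨1 / 2 - (max α 0 + ε) * c, by linarith, ∑ k ∈ Icc 1 T, γ k - T * (β ^ 2 / (4 * ε)),
    fun x f hpoinc hf => ?_⟩
  -- Young's inequality trades `β s` for `ε s²`; the slack `α < 1/(2c)` leaves room for `ε`.
  have hpoint : ∀ k ∈ Icc 1 T, -(max α 0 + ε) * x k ^ 2 + (γ k - β ^ 2 / (4 * ε)) ≤ f k := by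
    intro k hk
    have := mul_le_mul_sq_add_sq_div hε (-β) (x k)
    have := mul_le_mul_of_nonneg_right (le_max_left α 0) (sq_nonneg (x k))
    rw [neg_sq] at *
    linarith [hf k hk]
  have hsum := sum_le_sum hpoint
  rw [sum_add_distrib, sum_sub_distrib, ← mul_sum, sum_const, Nat.card_Icc, nsmul_eq_mul,
    Nat.add_sub_cancel] at hsum
  have := mul_le_mul_of_nonneg_left hpoinc (by positivity : 0 ≤ max α 0 + ε)
  linarith

lemma exists_energy_bound_of_saddle (T : ℕ) {c : ℝ} (hc : 0 < c) (U : Set ℝ)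
    {F : ℕ → ℝ → ℝ → ℝ → ℝ} {α₁ β₁ α₂ β₂ : ℝ} {γ₁ γ₂ : ℕ → ℝ}
    (hα₁ : α₁ < 1 / (2 * c)) (hα₂ : α₂ < 1 / (2 * c))
    (hlow : ∀ k ∈ Icc 1 T, ∀ s, ∀ v ∈ U, -α₁ * s ^ 2 + β₁ * s + γ₁ k ≤ F k s 0 v)
    (hupp : ∀ k ∈ Icc 1 T, ∀ t, ∀ v ∈ U, F k 0 t v ≤ α₂ * t ^ 2 + β₂ * t + γ₂ k) :
    ∃ M, ∀ u x y : ℕ → ℝ, (∀ k, u k ∈ U) →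
      ∑ k ∈ Icc 1 T, x k ^ 2 ≤ c * dirichletEnergy T x →
      ∑ k ∈ Icc 1 T, y k ^ 2 ≤ c * dirichletEnergy T y →
      saddleFunctional T F u x 0 ≤ saddleFunctional T F u 0 y →
      dirichletEnergy T x ≤ M ∧ dirichletEnergy T y ≤ M := by
  obtain ⟨a₁, ha₁, C₁, hx⟩ := exists_coercive_lower_bound T hc hα₁ β₁ γ₁
  obtain ⟨a₂, ha₂, C₂, hy⟩ := exists_coercive_lower_bound T hc hα₂ (-β₂) (-γ₂)
  refine ⟨max ((-C₁ - C₂) / a₁) ((-C₁ - C₂) / a₂), fun u x y hu hpx hpy hxy => ?_⟩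
  have hx := hx x _ hpx fun k hk => hlow k hk (x k) (u k) (hu k)
  have hy := hy y (fun k => -F k 0 (y k) (u k)) hpy fun k hk => by
    have := hupp k hk (y k) (u k) (hu k)
    simp only [Pi.neg_apply]
    linarith
  rw [saddleFunctional_zero_right, saddleFunctional_zero_left] at hxy
  rw [sum_neg_distrib] at hy
  have hEx := mul_nonneg ha₁.le (dirichletEnergy_nonneg T x)
  have hEy := mul_nonneg ha₂.le (dirichletEnergy_nonneg T y)
  constructor
  · exact le_max_of_le_left ((le_div_iff₀ ha₁).2 (by linarith))
  · exact le_max_of_le_right ((le_div_iff₀ ha₂).2 (by linarith))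

lemma abs_le_sqrt_of_sum_sq_le {T : ℕ} {x : ℕ → ℝ} (hx : x ∈ dirichletSpace T) {B : ℝ}
    (hB : ∑ k ∈ Icc 1 T, x k ^ 2 ≤ B) (k : ℕ) : |x k| ≤ √B := by
  by_cases hk : k ∈ Icc 1 T
  · exact Real.abs_le_sqrt <|
      (single_le_sum (f := fun j => x j ^ 2) (fun _ _ => sq_nonneg _) hk).trans hB
  · rw [eq_zero_of_mem_dirichletSpace hx hk, abs_zero]
    exact Real.sqrt_nonneg B

lemma exists_subseq_tendsto_pi_of_norm_le {ι E : Type*} [Countable ι] [NormedAddCommGroup E]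
    [ProperSpace E] {f : ℕ → ι → E} {R : ℝ} (hf : ∀ n i, ‖f n i‖ ≤ R) :
    ∃ g : ι → E, ∃ φ : ℕ → ℕ, StrictMono φ ∧
      ∀ i, Tendsto (fun n => f (φ n) i) atTop (𝓝 (g i)) := by
  have hK : IsCompact (Set.univ.pi fun _ : ι => Metric.closedBall (0 : E) R) :=
    isCompact_univ_pi fun _ => isCompact_closedBall 0 R
  obtain ⟨g, -, φ, hφ, hlim⟩ :=
    hK.tendsto_subseq fun n => Set.mem_univ_pi.2 fun i => mem_closedBall_zero_iff.2 (hf n i)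
  exact ⟨g, φ, hφ, tendsto_pi_nhds.1 hlim⟩

lemma tendsto_of_forall_abs_sub_le {a : ℕ → ℝ} {a₀ : ℝ}
    (h : ∀ ε > 0, ∃ n₀, ∀ n ≥ n₀, |a n - a₀| ≤ ε) : Tendsto a atTop (𝓝 a₀) :=
  (atTop_basis.tendsto_iff Metric.nhds_basis_closedBall).2 fun ε hε =>
    let ⟨n₀, hn₀⟩ := h ε hε
    ⟨n₀, trivial, fun n hn => Metric.mem_closedBall.2 (hn₀ n hn)⟩

lemma secondDiff_eq_of_tendsto {X : Type*} [TopologicalSpace X] {G : X → ℝ} (hG : Continuous G)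
    {w : ℕ → ℕ → ℝ} {w₀ : ℕ → ℝ} {p : ℕ → X} {p₀ : X} {k : ℕ}
    (hw : ∀ j, Tendsto (fun i => w i j) atTop (𝓝 (w₀ j))) (hp : Tendsto p atTop (𝓝 p₀))
    (h : ∀ i, w i (k + 1) - 2 * w i k + w i (k - 1) = G (p i)) :
    w₀ (k + 1) - 2 * w₀ k + w₀ (k - 1) = G p₀ :=
  tendsto_nhds_unique_of_eventuallyEq
    (((hw (k + 1)).sub ((hw k).const_mul 2)).add (hw (k - 1))) ((hG.tendsto p₀).comp hp)
    (Eventually.of_forall h)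

theorem stmt_19_general (T : ℕ) (D : ℝ)
    (S : Set (ℕ → ℝ))
    (hS : S = {x : ℕ → ℝ | x 0 = 0 ∧ ∀ k, T + 1 ≤ k → x k = 0})
    (c₂ : ℝ) (hc₂pos : 0 < c₂)
    (hc₂ : ∀ x ∈ S, ∑ k ∈ Finset.Icc 1 T, (x k) ^ 2 ≤
      c₂ * ∑ k ∈ Finset.Icc 1 (T + 1), (x k - x (k - 1)) ^ 2)
    (F Fx Fy : ℕ → ℝ → ℝ → ℝ → ℝ)
    -- H1: continuity of F, F_x, F_y and differentiability of F:
    (hFxcont : ∀ k, Continuous (fun p : ℝ × ℝ × ℝ => Fx k p.1 p.2.1 p.2.2))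
    (hFycont : ∀ k, Continuous (fun p : ℝ × ℝ × ℝ => Fy k p.1 p.2.1 p.2.2))
    (J : (ℕ → ℝ) → (ℕ → ℝ) → (ℕ → ℝ) → ℝ)
    (hJ : ∀ u x y, J u x y =
      (∑ k ∈ Finset.Icc 1 (T + 1),
        ((x k - x (k - 1)) ^ 2 / 2 - (y k - y (k - 1)) ^ 2 / 2)) +
      ∑ k ∈ Finset.Icc 1 T, F k (x k) (y k) (u k))
    -- H2 (uniform in |u| ≤ D):
    (H2 : ∀ y ∈ S, ∃ α₁ β₁ : ℝ, ∃ γ₁ : ℕ → ℝ, α₁ < 1 / (2 * c₂) ∧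
      ∀ k ∈ Finset.Icc 1 T, ∀ s u : ℝ, |u| ≤ D →
        -α₁ * s ^ 2 + β₁ * s + γ₁ k ≤ F k s (y k) u)
    -- H3 (uniform in |u| ≤ D):
    (H3 : ∀ x ∈ S, ∃ α₂ β₂ : ℝ, ∃ γ₂ : ℕ → ℝ, α₂ < 1 / (2 * c₂) ∧
      ∀ k ∈ Finset.Icc 1 T, ∀ t u : ℝ, |u| ≤ D →
        F k (x k) t u ≤ α₂ * t ^ 2 + β₂ * t + γ₂ k)
    -- the parameters:
    (u : ℕ → ℕ → ℝ) (u₀ : ℕ → ℝ)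
    (hu : ∀ n k, |u n k| ≤ D)
    (huconv : ∀ ε > (0 : ℝ), ∃ n₀ : ℕ, ∀ n ≥ n₀, ∀ k ∈ Finset.Icc 1 T,
      |u n k - u₀ k| ≤ ε)
    -- the saddle-point solutions (x_n, y_n):
    (xs ys : ℕ → ℕ → ℝ)
    (hmem : ∀ n, xs n ∈ S ∧ ys n ∈ S)
    (hsol : ∀ n, ∀ k ∈ Finset.Icc 1 T,
      xs n (k + 1) - 2 * xs n k + xs n (k - 1) = Fx k (xs n k) (ys n k) (u n k) ∧
      ys n (k + 1) - 2 * ys n k + ys n (k - 1) = -(Fy k (xs n k) (ys n k) (u n k)))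
    (hsaddle : ∀ n, ∀ x ∈ S, ∀ y ∈ S,
      J (u n) (xs n) y ≤ J (u n) (xs n) (ys n) ∧
      J (u n) (xs n) (ys n) ≤ J (u n) x (ys n)) :
    ∃ φ : ℕ → ℕ, StrictMono φ ∧ ∃ x₀ ∈ S, ∃ y₀ ∈ S,
      (∀ k, Filter.Tendsto (fun i => xs (φ i) k) Filter.atTop (nhds (x₀ k))) ∧
      (∀ k, Filter.Tendsto (fun i => ys (φ i) k) Filter.atTop (nhds (y₀ k))) ∧
      (∀ k ∈ Finset.Icc 1 T,
        x₀ (k + 1) - 2 * x₀ k + x₀ (k - 1) = Fx k (x₀ k) (y₀ k) (u₀ k) ∧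
        y₀ (k + 1) - 2 * y₀ k + y₀ (k - 1) = -(Fy k (x₀ k) (y₀ k) (u₀ k))) ∧
      x₀ 0 = 0 ∧ x₀ (T + 1) = 0 ∧ y₀ 0 = 0 ∧ y₀ (T + 1) = 0 := by
  subst hS
  obtain rfl : J = saddleFunctional T F := funext fun v => funext fun x => funext (hJ v x)
  have h0 := zero_mem_dirichletSpace T
  obtain ⟨α₁, β₁, γ₁, hα₁, hlow⟩ := H2 0 h0
  obtain ⟨α₂, β₂, γ₂, hα₂, hupp⟩ := H3 0 h0
  obtain ⟨M, hM⟩ := exists_energy_bound_of_saddle T hc₂pos {v | |v| ≤ D} hα₁ hα₂ hlow hupp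
  have hbound : ∀ n k, ‖(xs n k, ys n k)‖ ≤ √(c₂ * M) := fun n k => by
    obtain ⟨hEx, hEy⟩ := hM (u n) (xs n) (ys n) (hu n) (hc₂ _ (hmem n).1) (hc₂ _ (hmem n).2)
      ((hsaddle n 0 h0 0 h0).1.trans (hsaddle n 0 h0 0 h0).2)
    rw [Prod.norm_mk, Real.norm_eq_abs, Real.norm_eq_abs]
    exact max_le
      (abs_le_sqrt_of_sum_sq_le (hmem n).1 ((hc₂ _ (hmem n).1).trans (by gcongr; exact hEx)) k)
      (abs_le_sqrt_of_sum_sq_le (hmem n).2 ((hc₂ _ (hmem n).2).trans (by gcongr; exact hEy)) k)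
  obtain ⟨g, φ, hφ, hlim⟩ := exists_subseq_tendsto_pi_of_norm_le hbound
  have hx k : Tendsto (fun i => xs (φ i) k) atTop (𝓝 (g k).1) :=
    (continuous_fst.tendsto _).comp (hlim k)
  have hy k : Tendsto (fun i => ys (φ i) k) atTop (𝓝 (g k).2) :=
    (continuous_snd.tendsto _).comp (hlim k)
  have hx₀ := (isClosed_dirichletSpace T).mem_of_tendsto (tendsto_pi_nhds.2 hx)
    (Eventually.of_forall fun i => (hmem (φ i)).1)
  have hy₀ := (isClosed_dirichletSpace T).mem_of_tendsto (tendsto_pi_nhds.2 hy)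
    (Eventually.of_forall fun i => (hmem (φ i)).2)
  refine ⟨φ, hφ, _, hx₀, _, hy₀, hx, hy, fun k hk => ?_,
    hx₀.1, hx₀.2 _ le_rfl, hy₀.1, hy₀.2 _ le_rfl⟩
  have hu₀ := tendsto_of_forall_abs_sub_le fun ε hε =>
    (huconv ε hε).imp fun _ h n hn => h n hn k hk
  have hp := (hx k).prodMk_nhds ((hy k).prodMk_nhds (hu₀.comp hφ.tendsto_atTop))
  exact ⟨secondDiff_eq_of_tendsto (hFxcont k) hx hp fun i => (hsol (φ i) k hk).1,
    secondDiff_eq_of_tendsto (hFycont k).neg hy hp fun i => (hsol (φ i) k hk).2⟩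

/-- Continuous dependence on parameters: if `u_n → u₀` uniformly (`‖u_n‖_C ≤ D`) and
`(x_n, y_n)` are saddle-point solutions of the discrete system with parameter `u_n`,
then a subsequence converges to a pair `(x₀, y₀)` solving the system with parameter `u₀`. -/
theorem stmt_19 (T : ℕ) (hT : 1 ≤ T) (D : ℝ) (hD : 0 < D)
    (S : Set (ℕ → ℝ))
    (hS : S = {x : ℕ → ℝ | x 0 = 0 ∧ ∀ k, T + 1 ≤ k → x k = 0})
    (c₂ : ℝ) (hc₂pos : 0 < c₂)
    (hc₂ : ∀ x ∈ S, ∑ k ∈ Finset.Icc 1 T, (x k) ^ 2 ≤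
      c₂ * ∑ k ∈ Finset.Icc 1 (T + 1), (x k - x (k - 1)) ^ 2)
    (F Fx Fy : ℕ → ℝ → ℝ → ℝ → ℝ)
    -- H1: continuity of F, F_x, F_y and differentiability of F:
    (hF : ∀ k, Continuous (fun p : ℝ × ℝ × ℝ => F k p.1 p.2.1 p.2.2))
    (hFx : ∀ k s t u, HasDerivAt (fun s' => F k s' t u) (Fx k s t u) s)
    (hFy : ∀ k s t u, HasDerivAt (fun t' => F k s t' u) (Fy k s t u) t)
    (hFxcont : ∀ k, Continuous (fun p : ℝ × ℝ × ℝ => Fx k p.1 p.2.1 p.2.2))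
    (hFycont : ∀ k, Continuous (fun p : ℝ × ℝ × ℝ => Fy k p.1 p.2.1 p.2.2))
    (J : (ℕ → ℝ) → (ℕ → ℝ) → (ℕ → ℝ) → ℝ)
    (hJ : ∀ u x y, J u x y =
      (∑ k ∈ Finset.Icc 1 (T + 1),
        ((x k - x (k - 1)) ^ 2 / 2 - (y k - y (k - 1)) ^ 2 / 2)) +
      ∑ k ∈ Finset.Icc 1 T, F k (x k) (y k) (u k))
    -- H2 (uniform in |u| ≤ D):
    (H2 : ∀ y ∈ S, ∃ α₁ β₁ : ℝ, ∃ γ₁ : ℕ → ℝ, α₁ < 1 / (2 * c₂) ∧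
      ∀ k ∈ Finset.Icc 1 T, ∀ s u : ℝ, |u| ≤ D →
        -α₁ * s ^ 2 + β₁ * s + γ₁ k ≤ F k s (y k) u)
    -- H3 (uniform in |u| ≤ D):
    (H3 : ∀ x ∈ S, ∃ α₂ β₂ : ℝ, ∃ γ₂ : ℕ → ℝ, α₂ < 1 / (2 * c₂) ∧
      ∀ k ∈ Finset.Icc 1 T, ∀ t u : ℝ, |u| ≤ D →
        F k (x k) t u ≤ α₂ * t ^ 2 + β₂ * t + γ₂ k)
    -- H4, H5:
    (H4 : ∀ u : ℕ → ℝ, (∀ k, |u k| ≤ D) → ∀ y ∈ S, ConvexOn ℝ S (fun x => J u x y))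
    (H5 : ∀ u : ℕ → ℝ, (∀ k, |u k| ≤ D) → ∀ x ∈ S, ConcaveOn ℝ S (fun y => J u x y))
    -- the parameters:
    (u : ℕ → ℕ → ℝ) (u₀ : ℕ → ℝ)
    (hu : ∀ n k, |u n k| ≤ D) (hu₀ : ∀ k, |u₀ k| ≤ D)
    (huconv : ∀ ε > (0 : ℝ), ∃ n₀ : ℕ, ∀ n ≥ n₀, ∀ k ∈ Finset.Icc 1 T,
      |u n k - u₀ k| ≤ ε)
    -- the saddle-point solutions (x_n, y_n):
    (xs ys : ℕ → ℕ → ℝ)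
    (hmem : ∀ n, xs n ∈ S ∧ ys n ∈ S)
    (hsol : ∀ n, ∀ k ∈ Finset.Icc 1 T,
      xs n (k + 1) - 2 * xs n k + xs n (k - 1) = Fx k (xs n k) (ys n k) (u n k) ∧
      ys n (k + 1) - 2 * ys n k + ys n (k - 1) = -(Fy k (xs n k) (ys n k) (u n k)))
    (hsaddle : ∀ n, ∀ x ∈ S, ∀ y ∈ S,
      J (u n) (xs n) y ≤ J (u n) (xs n) (ys n) ∧
      J (u n) (xs n) (ys n) ≤ J (u n) x (ys n)) :
    ∃ φ : ℕ → ℕ, StrictMono φ ∧ ∃ x₀ ∈ S, ∃ y₀ ∈ S,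
      (∀ k, Filter.Tendsto (fun i => xs (φ i) k) Filter.atTop (nhds (x₀ k))) ∧
      (∀ k, Filter.Tendsto (fun i => ys (φ i) k) Filter.atTop (nhds (y₀ k))) ∧
      (∀ k ∈ Finset.Icc 1 T,
        x₀ (k + 1) - 2 * x₀ k + x₀ (k - 1) = Fx k (x₀ k) (y₀ k) (u₀ k) ∧
        y₀ (k + 1) - 2 * y₀ k + y₀ (k - 1) = -(Fy k (x₀ k) (y₀ k) (u₀ k))) ∧
      x₀ 0 = 0 ∧ x₀ (T + 1) = 0 ∧ y₀ 0 = 0 ∧ y₀ (T + 1) = 0 :=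
  stmt_19_general T D S hS c₂ hc₂pos hc₂ F Fx Fy hFxcont hFycont J hJ H2 H3 u u₀ hu huconv xs ys
    hmem hsol hsaddle
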